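/- arXiv:2407.13540 — 2 statements merged into one kernel-verified Lean document; each statement's English description precedes it below -/
import Mathlib

section
/- Let (π, H_π) be a projective discrete series representation of a unimodular amenable second countable group G with formal degree d_π, and let g ∈ D_π. If Λ ⊆ G is such that {π(λ)g}_{λ∈Λ} is a Riesz sequence in H_π, then the upper Beurling density satisfies D^+(Λ) := lim_n sup_{x∈G} #(Λ ∩ xK_n)/μ(K_n) ≤ d_π, for any strong Følner exhaustion sequence (K_n). -/
/-!
Fix a finite `F ⊆ Λ ∩ xKₙ` and let `V` be the span of the vectors `π(λ)g`, `λ ∈ F`. The lower Riesz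
bound makes them linearly independent, so `dim V = #F`, and the orthogonality relations give
`∫ ‖P_V π(y)g‖² dy = #F · d_π⁻¹ ‖g‖²`. Split the integral at `xKₙKₘ°`. Inside, the integrand is at
most `‖g‖²`. Outside, the lower Riesz bound gives `A ‖P_V w‖² ≤ ∑_{λ ∈ F} |⟨π(λ)g, w⟩|²`, and since
`λ ∈ xKₙ` each of these terms contributes at most the tail `τₘ = ∫_{G ∖ Kₘ°} |⟨g, π(y)g⟩|²`. Hence
`#F (1 - d_π τₘ / (A‖g‖²)) ≤ d_π μ(KₙKₘ)`. Now `τₘ → 0` because the `Kₘ°` exhaust `G`, and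
`μ(KₙKₘ) ≤ (1 + η) μ(Kₙ)` for large `n` by the Følner property.
-/

open MeasureTheory Pointwise Filter

section RieszSequence

variable (𝕜 : Type*) {E ι : Type*} [RCLike 𝕜] [NormedAddCommGroup E] [InnerProductSpace 𝕜 E]

def HasLowerRieszBound (A : ℝ) (v : ι → E) : Prop :=
  ∀ c : ι →₀ 𝕜, A * ∑ i ∈ c.support, ‖c i‖ ^ 2 ≤ ‖∑ i ∈ c.support, c i • v i‖ ^ 2

variable {𝕜} {A : ℝ} {v : ι → E}

lemma Submodule.norm_starProjection_sq_eq_sum {κ : Type*} [Fintype κ] (V : Submodule 𝕜 E)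
    [V.HasOrthogonalProjection] (b : OrthonormalBasis κ 𝕜 V) (w : E) :
    ‖V.starProjection w‖ ^ 2 = ∑ j, ‖inner 𝕜 (b j : E) w‖ ^ 2 := by
  rw [V.starProjection_apply, Submodule.norm_coe, ← b.sum_sq_norm_inner_right]
  simp

namespace HasLowerRieszBound

lemma le_norm_sq (h : HasLowerRieszBound 𝕜 A v) (i : ι) : A ≤ ‖v i‖ ^ 2 := by
  simpa using h (Finsupp.single i 1)

lemma linearIndependent (hA : 0 < A) (h : HasLowerRieszBound 𝕜 A v) :
    LinearIndependent 𝕜 v := by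
  rw [linearIndependent_iff]
  intro c hc
  have hsum : ∑ i ∈ c.support, ‖c i‖ ^ 2 = 0 := by
    have hc' := h c
    rw [Finsupp.linearCombination_apply] at hc
    rw [show ∑ i ∈ c.support, c i • v i = 0 from hc, norm_zero] at hc'
    exact le_antisymm (nonpos_of_mul_nonpos_right (by simpa using hc') hA)
      (Finset.sum_nonneg fun i _ => by positivity)
  rw [Finset.sum_eq_zero_iff_of_nonneg fun i _ => by positivity] at hsum
  rw [← Finsupp.support_eq_empty, Finset.eq_empty_iff_forall_notMem]
  intro i hi
  exact Finsupp.mem_support_iff.mp hi (by simpa using hsum i hi)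

lemma mul_norm_inner_sq_le (hA : 0 ≤ A) (h : HasLowerRieszBound 𝕜 A v) {s : Finset ι} {u : E}
    (hu : u ∈ Submodule.span 𝕜 (v '' s)) (w : E) :
    A * ‖inner 𝕜 u w‖ ^ 2 ≤ ‖u‖ ^ 2 * ∑ i ∈ s, ‖inner 𝕜 (v i) w‖ ^ 2 := by
  obtain ⟨c, hc, rfl⟩ := (Finsupp.mem_span_image_iff_linearCombination 𝕜).mp hu
  have hcs : c.support ⊆ s := hc
  rw [Finsupp.linearCombination_apply, Finsupp.sum]
  have hcauchy : ‖inner 𝕜 (∑ i ∈ c.support, c i • v i) w‖ ^ 2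
      ≤ (∑ i ∈ c.support, ‖c i‖ ^ 2) * ∑ i ∈ s, ‖inner 𝕜 (v i) w‖ ^ 2 := by
    calc ‖inner 𝕜 (∑ i ∈ c.support, c i • v i) w‖ ^ 2
        ≤ (∑ i ∈ c.support, ‖c i‖ * ‖inner 𝕜 (v i) w‖) ^ 2 := by
          gcongr
          rw [sum_inner]
          refine (norm_sum_le _ _).trans_eq (Finset.sum_congr rfl fun i _ => ?_)
          rw [inner_smul_left, norm_mul, RCLike.norm_conj]
      _ ≤ (∑ i ∈ c.support, ‖c i‖ ^ 2) * ∑ i ∈ c.support, ‖inner 𝕜 (v i) w‖ ^ 2 :=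
          Finset.sum_mul_sq_le_sq_mul_sq _ _ _
      _ ≤ _ := by gcongr
  calc A * ‖inner 𝕜 (∑ i ∈ c.support, c i • v i) w‖ ^ 2
      ≤ A * ((∑ i ∈ c.support, ‖c i‖ ^ 2) * ∑ i ∈ s, ‖inner 𝕜 (v i) w‖ ^ 2) :=
        mul_le_mul_of_nonneg_left hcauchy hA
    _ ≤ ‖∑ i ∈ c.support, c i • v i‖ ^ 2 * ∑ i ∈ s, ‖inner 𝕜 (v i) w‖ ^ 2 := by
      rw [← mul_assoc]
      gcongr
      exact h c

lemma mul_norm_starProjection_sq_le (hA : 0 ≤ A) (h : HasLowerRieszBound 𝕜 A v)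
    (s : Finset ι) [(Submodule.span 𝕜 (v '' s)).HasOrthogonalProjection] (w : E) :
    A * ‖(Submodule.span 𝕜 (v '' s)).starProjection w‖ ^ 2
      ≤ ∑ i ∈ s, ‖inner 𝕜 (v i) w‖ ^ 2 := by
  set V := Submodule.span 𝕜 (v '' s)
  have hu : ‖inner 𝕜 (V.starProjection w) w‖ = ‖V.starProjection w‖ ^ 2 := by
    rw [V.starProjection_apply, ← Submodule.inner_orthogonalProjectionOnto_eq_of_mem_left,
      inner_self_eq_norm_sq_to_K]
    simp
  have hbound := h.mul_norm_inner_sq_le hA (V.starProjection_apply_mem w) w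
  rw [hu] at hbound
  rcases (sq_nonneg ‖V.starProjection w‖).eq_or_lt with hu0 | hu0
  · rw [← hu0, mul_zero]
    exact Finset.sum_nonneg fun i _ => by positivity
  · nlinarith

end HasLowerRieszBound

end RieszSequence

section ProjectiveRepresentation

variable {𝕜 G H : Type*} [RCLike 𝕜] [NormedAddCommGroup H] [InnerProductSpace 𝕜 H]
  {π : G → H →L[𝕜] H}

lemma norm_inner_apply_apply_eq_norm_inner_inv_mul [Group G] (hπnorm : ∀ x f, ‖π x f‖ = ‖f‖)
    (hπproj : ∀ x y, ∃ c : 𝕜, ‖c‖ = 1 ∧ (π x).comp (π y) = c • π (x * y))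
    (a b : G) (f h : H) :
    ‖inner 𝕜 (π a f) (π b h)‖ = ‖inner 𝕜 f (π (a⁻¹ * b) h)‖ := by
  obtain ⟨c, hc, hab⟩ := hπproj a (a⁻¹ * b)
  rw [mul_inv_cancel_left] at hab
  have hisom : inner 𝕜 (π a f) (π a (π (a⁻¹ * b) h)) = inner 𝕜 f (π (a⁻¹ * b) h) :=
    LinearIsometry.inner_map_map ⟨(π a).toLinearMap, hπnorm a⟩ f _
  rw [← hisom, ← ContinuousLinearMap.comp_apply, hab, smul_apply,
    inner_smul_right, norm_mul, hc, one_mul]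

variable [MeasurableSpace G] {μ : Measure G} {dπ : ℝ}

lemma integrable_norm_inner_sq (hdπ : dπ ≠ 0)
    (hortho : ∀ f h : H, ∫ x, ‖inner 𝕜 f (π x h)‖ ^ 2 ∂μ = dπ⁻¹ * ‖f‖ ^ 2 * ‖h‖ ^ 2) (f h : H) :
    Integrable (fun x => ‖inner 𝕜 f (π x h)‖ ^ 2) μ := by
  rcases eq_or_ne f 0 with rfl | hf
  · simp
  rcases eq_or_ne h 0 with rfl | hh
  · simp
  apply Integrable.of_integral_ne_zero
  rw [hortho]
  have hf' := norm_ne_zero_iff.mpr hf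
  have hh' := norm_ne_zero_iff.mpr hh
  positivity

lemma integrable_norm_starProjection_sq (hdπ : dπ ≠ 0)
    (hortho : ∀ f h : H, ∫ x, ‖inner 𝕜 f (π x h)‖ ^ 2 ∂μ = dπ⁻¹ * ‖f‖ ^ 2 * ‖h‖ ^ 2)
    (V : Submodule 𝕜 H) [FiniteDimensional 𝕜 V] (g : H) :
    Integrable (fun x => ‖V.starProjection (π x g)‖ ^ 2) μ := by
  simp_rw [V.norm_starProjection_sq_eq_sum (stdOrthonormalBasis 𝕜 V)]
  exact integrable_finsetSum _ fun j _ => integrable_norm_inner_sq hdπ hortho _ g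

lemma integral_norm_starProjection_sq (hdπ : dπ ≠ 0)
    (hortho : ∀ f h : H, ∫ x, ‖inner 𝕜 f (π x h)‖ ^ 2 ∂μ = dπ⁻¹ * ‖f‖ ^ 2 * ‖h‖ ^ 2)
    (V : Submodule 𝕜 H) [FiniteDimensional 𝕜 V] (g : H) :
    ∫ x, ‖V.starProjection (π x g)‖ ^ 2 ∂μ = Module.finrank 𝕜 V * (dπ⁻¹ * ‖g‖ ^ 2) := by
  simp_rw [V.norm_starProjection_sq_eq_sum (stdOrthonormalBasis 𝕜 V)]
  rw [integral_finsetSum _ fun j _ => integrable_norm_inner_sq hdπ hortho _ g]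
  simp [hortho, Submodule.norm_coe, OrthonormalBasis.norm_eq_one]

end ProjectiveRepresentation

lemma tendsto_setIntegral_compl_of_monotone {X E ι : Type*} [MeasurableSpace X]
    [NormedAddCommGroup E] [NormedSpace ℝ E] [Preorder ι] [atTop.IsCountablyGenerated (α := ι)]
    {μ : Measure X} {f : X → E} (hf : Integrable f μ) {s : ι → Set X}
    (hs : ∀ i, MeasurableSet (s i)) (hmono : Monotone s) (hunion : ⋃ i, s i = Set.univ) :
    Tendsto (fun i => ∫ x in (s i)ᶜ, f x ∂μ) atTop (nhds 0) := by
  have h := tendsto_setIntegral_of_monotone hs hmono hf.integrableOn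
  rw [hunion, Measure.restrict_univ] at h
  simpa [setIntegral_compl (hs _) hf] using (tendsto_const_nhds (x := ∫ x, f x ∂μ)).sub h

lemma setIntegral_compl_comp_mul_left_le {G : Type*} [Group G] [MeasurableSpace G]
    [MeasurableMul G] {μ : Measure G} [μ.IsMulLeftInvariant] {φ : G → ℝ} (hφ : Integrable φ μ)
    (hφ0 : 0 ≤ φ) {a : G} {T U : Set G} (hT : MeasurableSet T) (hU : MeasurableSet U)
    (hUT : a • U ⊆ T) :
    ∫ y in Tᶜ, φ (a⁻¹ * y) ∂μ ≤ ∫ y in Uᶜ, φ y ∂μ := by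
  have hψ : Integrable (fun y => Uᶜ.indicator φ (a⁻¹ * y)) μ :=
    (hφ.indicator hU.compl).comp_mul_left a⁻¹
  calc ∫ y in Tᶜ, φ (a⁻¹ * y) ∂μ = ∫ y in Tᶜ, Uᶜ.indicator φ (a⁻¹ * y) ∂μ := by
        refine setIntegral_congr_fun hT.compl fun y hy => (Set.indicator_of_mem ?_ φ).symm
        intro hyU
        exact hy (hUT ⟨a⁻¹ * y, hyU, mul_inv_cancel_left a y⟩)
    _ ≤ ∫ y, Uᶜ.indicator φ (a⁻¹ * y) ∂μ :=
        setIntegral_le_integral hψ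
          (Eventually.of_forall fun y => Set.indicator_nonneg (fun z _ => hφ0 z) _)
    _ = ∫ y in Uᶜ, φ y ∂μ := by
        rw [integral_mul_left_eq_self (Uᶜ.indicator φ) a⁻¹, integral_indicator hU.compl]

lemma eventually_measureReal_mul_le_of_tendsto {G : Type*} [MulOneClass G] [MeasurableSpace G]
    {μ : Measure G} {K : ℕ → Set G} {C : Set G} (hC : 1 ∈ C) (hK : ∀ n, μ (K n) ≠ ⊤)
    (hfolner : Tendsto (fun n => μ (K n * C ∩ (K n)ᶜ * C) / μ (K n)) atTop (nhds 0))
    {η : ℝ} (hη : 0 < η) :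
    ∀ᶠ n in atTop, μ.real (K n * C) ≤ (1 + η) * μ.real (K n) := by
  have hη' : ENNReal.ofReal η ≠ 0 := (ENNReal.ofReal_pos.mpr hη).ne'
  filter_upwards [hfolner.eventually_lt_const (pos_iff_ne_zero.mpr hη')] with n hn
  -- `K n * C ∩ (K n)ᶜ * C` parses as `(K n * C ∩ (K n)ᶜ) * C`, which contains `K n * C \ K n`
  -- because `1 ∈ C`.
  have hsub : K n * C ⊆ K n ∪ (K n * C ∩ (K n)ᶜ * C) := by
    intro y hy
    by_cases hyK : y ∈ K n
    · exact Or.inl hyK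
    · exact Or.inr (Set.mem_mul.mpr ⟨y, ⟨hy, hyK⟩, 1, hC, mul_one y⟩)
  have hboundary : μ (K n * C ∩ (K n)ᶜ * C) ≤ ENNReal.ofReal η * μ (K n) :=
    (ENNReal.div_le_iff_le_mul (Or.inr ENNReal.ofReal_ne_top) (Or.inr hη')).mp hn.le
  have hle : μ (K n * C) ≤ (1 + ENNReal.ofReal η) * μ (K n) := by
    calc μ (K n * C) ≤ μ (K n) + μ (K n * C ∩ (K n)ᶜ * C) :=
          (measure_mono hsub).trans (measure_union_le _ _)
      _ ≤ (1 + ENNReal.ofReal η) * μ (K n) := by rw [add_mul, one_mul]; gcongr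
  have hfin : (1 + ENNReal.ofReal η) * μ (K n) ≠ ⊤ :=
    ENNReal.mul_ne_top (ENNReal.add_ne_top.mpr ⟨ENNReal.one_ne_top, ENNReal.ofReal_ne_top⟩) (hK n)
  simpa [measureReal_def, ENNReal.toReal_mul, ENNReal.toReal_add, hη.le]
    using ENNReal.toReal_mono hfin hle

lemma Set.finite_inter_and_ncard_le_of_forall_finset {α : Type*} {Λ t : Set α} {M : ℝ}
    (h : ∀ F : Finset Λ, (∀ l ∈ F, (l : α) ∈ t) → (F.card : ℝ) ≤ M) :
    (Λ ∩ t).Finite ∧ ((Λ ∩ t).ncard : ℝ) ≤ M := by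
  set s : Set Λ := Subtype.val ⁻¹' t
  have hs : s.Finite := by
    by_contra hinf
    obtain ⟨F, hFs, hF⟩ := Set.Infinite.exists_subset_card_eq hinf (⌊M⌋₊ + 1)
    have hle := Nat.le_floor (h F fun l hl => hFs hl)
    omega
  rw [← Subtype.image_preimage_coe, Set.ncard_image_of_injective _ Subtype.val_injective,
    Set.ncard_eq_toFinset_card _ hs]
  exact ⟨hs.image _, h hs.toFinset fun l hl => hs.mem_toFinset.mp hl⟩

section CountingEstimate

variable {𝕜 G H ι : Type*} [RCLike 𝕜] [Group G] [MeasurableSpace G] [MeasurableMul G]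
  [NormedAddCommGroup H] [InnerProductSpace 𝕜 H]
  {μ : Measure G} [μ.IsMulLeftInvariant] {π : G → H →L[𝕜] H} {dπ A : ℝ} {g : H} {p : ι → G}

lemma card_mul_le_measure_add_tail (hπnorm : ∀ x f, ‖π x f‖ = ‖f‖)
    (hπproj : ∀ x y, ∃ c : 𝕜, ‖c‖ = 1 ∧ (π x).comp (π y) = c • π (x * y))
    (hdπ : dπ ≠ 0)
    (hortho : ∀ f h : H, ∫ x, ‖inner 𝕜 f (π x h)‖ ^ 2 ∂μ = dπ⁻¹ * ‖f‖ ^ 2 * ‖h‖ ^ 2)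
    (hA : 0 < A) (hv : HasLowerRieszBound 𝕜 A fun i => π (p i) g) (s : Finset ι)
    {T U : Set G} (hT : MeasurableSet T) (hTfin : μ T ≠ ⊤) (hU : MeasurableSet U)
    (hUT : ∀ i ∈ s, p i • U ⊆ T) :
    s.card * (dπ⁻¹ * ‖g‖ ^ 2)
      ≤ ‖g‖ ^ 2 * μ.real T + A⁻¹ * (s.card * ∫ y in Uᶜ, ‖inner 𝕜 g (π y g)‖ ^ 2 ∂μ) := by
  set V := Submodule.span 𝕜 ((fun i => π (p i) g) '' s) with hV
  have : FiniteDimensional 𝕜 V := FiniteDimensional.span_of_finite 𝕜 (s.finite_toSet.image _)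
  set φ : G → ℝ := fun y => ‖inner 𝕜 g (π y g)‖ ^ 2
  have hφ : Integrable φ μ := integrable_norm_inner_sq hdπ hortho g g
  have hS : Integrable (fun y => ‖V.starProjection (π y g)‖ ^ 2) μ :=
    integrable_norm_starProjection_sq hdπ hortho V g
  have hdim : Module.finrank 𝕜 V = s.card := by
    rw [hV, Set.image_eq_range]
    exact (finrank_span_eq_card ((hv.linearIndependent hA).comp _ Subtype.val_injective)).trans
      (Fintype.card_coe s)
  have hnear : ∫ y in T, ‖V.starProjection (π y g)‖ ^ 2 ∂μ ≤ ‖g‖ ^ 2 * μ.real T := by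
    refine (Real.le_norm_self _).trans
      (norm_setIntegral_le_of_norm_le_const hTfin.lt_top fun y _ => ?_)
    rw [Real.norm_of_nonneg (by positivity), ← hπnorm y g]
    gcongr
    exact V.norm_starProjection_apply_le _
  have hshift : ∀ i y, ‖inner 𝕜 (π (p i) g) (π y g)‖ ^ 2 = φ ((p i)⁻¹ * y) := fun i y => by
    rw [norm_inner_apply_apply_eq_norm_inner_inv_mul hπnorm hπproj]
  have hfar : ∫ y in Tᶜ, ‖V.starProjection (π y g)‖ ^ 2 ∂μ
      ≤ A⁻¹ * (s.card * ∫ y in Uᶜ, φ y ∂μ) := by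
    calc ∫ y in Tᶜ, ‖V.starProjection (π y g)‖ ^ 2 ∂μ
        ≤ ∫ y in Tᶜ, A⁻¹ * ∑ i ∈ s, φ ((p i)⁻¹ * y) ∂μ := by
          refine setIntegral_mono_on hS.integrableOn ?_ hT.compl fun y _ => ?_
          · exact
              ((integrable_finsetSum _ fun i _ => hφ.comp_mul_left _).const_mul _).integrableOn
          · rw [le_inv_mul_iff₀ hA]
            simpa [hshift] using hv.mul_norm_starProjection_sq_le hA.le s (π y g)
      _ = A⁻¹ * ∑ i ∈ s, ∫ y in Tᶜ, φ ((p i)⁻¹ * y) ∂μ := by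
          rw [integral_const_mul,
            integral_finsetSum _ fun i _ => (hφ.comp_mul_left _).integrableOn]
      _ ≤ A⁻¹ * ∑ i ∈ s, ∫ y in Uᶜ, φ y ∂μ := by
          gcongr with i hi
          exact setIntegral_compl_comp_mul_left_le hφ (fun _ => by positivity) hT hU (hUT i hi)
      _ = A⁻¹ * (s.card * ∫ y in Uᶜ, φ y ∂μ) := by rw [Finset.sum_const, nsmul_eq_mul]
  have htotal := integral_add_compl hT hS
  rw [integral_norm_starProjection_sq hdπ hortho V g, hdim] at htotal
  linarith

lemma card_mul_one_sub_le_measure [TopologicalSpace G] [IsTopologicalGroup G] [BorelSpace G]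
    (hπnorm : ∀ x f, ‖π x f‖ = ‖f‖)
    (hπproj : ∀ x y, ∃ c : 𝕜, ‖c‖ = 1 ∧ (π x).comp (π y) = c • π (x * y))
    (hdπ : 0 < dπ)
    (hortho : ∀ f h : H, ∫ x, ‖inner 𝕜 f (π x h)‖ ^ 2 ∂μ = dπ⁻¹ * ‖f‖ ^ 2 * ‖h‖ ^ 2)
    (hA : 0 < A) (hv : HasLowerRieszBound 𝕜 A fun i => π (p i) g) (s : Finset ι)
    {x : G} {K U : Set G} (hs : ∀ i ∈ s, p i ∈ x • K) (hU : IsOpen U) (hKU : μ (K * U) ≠ ⊤) :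
    s.card * (1 - dπ * (∫ y in Uᶜ, ‖inner 𝕜 g (π y g)‖ ^ 2 ∂μ) / (A * ‖g‖ ^ 2))
      ≤ dπ * μ.real (K * U) := by
  rcases s.eq_empty_or_nonempty with rfl | ⟨i, hi⟩
  · simpa using by positivity
  have hg : A ≤ ‖g‖ ^ 2 := hπnorm (p i) g ▸ hv.le_norm_sq i
  have hμT : μ (x • (K * U)) = μ (K * U) := measure_smul μ x _
  have hUT : ∀ i ∈ s, p i • U ⊆ x • (K * U) := by
    intro i hi
    obtain ⟨k, hk, hxk⟩ := hs i hi
    rw [show p i = x * k from hxk.symm, ← smul_smul]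
    exact Set.smul_set_mono (Set.smul_set_subset_mul hk)
  have key := card_mul_le_measure_add_tail hπnorm hπproj hdπ.ne' hortho hA hv s
    (hU.mul_left.smul x).measurableSet (hμT ▸ hKU) hU.measurableSet hUT
  rw [measureReal_def, hμT, ← measureReal_def] at key
  set τ := ∫ y in Uᶜ, ‖inner 𝕜 g (π y g)‖ ^ 2 ∂μ
  set γ := ‖g‖ ^ 2
  have hγ : 0 < γ := hA.trans_le hg
  calc (s.card : ℝ) * (1 - dπ * τ / (A * γ))
      = dπ / γ * (s.card * (dπ⁻¹ * γ) - A⁻¹ * (s.card * τ)) := by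
        field_simp
    _ ≤ dπ / γ * (γ * μ.real (K * U)) := by gcongr; linarith
    _ = dπ * μ.real (K * U) := by field_simp

end CountingEstimate

lemma le_add_mul_of_mul_one_sub_le {c d ε θ M : ℝ} (hd : 0 < d) (hε : 0 < ε) (hc : 0 ≤ c)
    (hθ : θ ≤ ε / (2 * d + ε)) (h : c * (1 - θ) ≤ d * ((1 + ε / (2 * d + ε)) * M)) :
    c ≤ (d + ε) * M := by
  set η := ε / (2 * d + ε)
  have hη : η < 1 := (div_lt_one (by positivity)).mpr (by linarith)
  have hbalance : d * (1 + η) = (d + ε) * (1 - η) := by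
    simp only [η]
    field_simp
    ring
  refine le_of_mul_le_mul_right ?_ (sub_pos.mpr hη)
  calc c * (1 - η) ≤ c * (1 - θ) := by gcongr
    _ ≤ d * ((1 + η) * M) := h
    _ = (d + ε) * M * (1 - η) := by rw [← mul_assoc, hbalance]; ring

theorem coherent_riesz_upper_density_general {G H : Type*} [Group G] [TopologicalSpace G]
    [IsTopologicalGroup G] [MeasurableSpace G] [BorelSpace G]
    [NormedAddCommGroup H] [InnerProductSpace ℂ H]
    (μ : Measure G) [μ.IsHaarMeasure]
    (π : G → H →L[ℂ] H)
    (hπnorm : ∀ (x : G) (f : H), ‖π x f‖ = ‖f‖)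
    (hπproj : ∀ x y : G, ∃ c : ℂ, ‖c‖ = 1 ∧ (π x).comp (π y) = c • π (x * y))
    (dπ : ℝ) (hdπ : 0 < dπ)
    (hortho : ∀ f h : H, ∫ x, ‖(inner ℂ f (π x h) : ℂ)‖ ^ 2 ∂μ = dπ⁻¹ * ‖f‖ ^ 2 * ‖h‖ ^ 2)
    (K : ℕ → Set G)
    (hKcpt : ∀ n, IsCompact (K n))
    (hK1 : ∀ n, (1 : G) ∈ K n) (hKmono : ∀ n, K n ⊆ interior (K (n + 1)))
    (hKexh : (⋃ n, K n) = Set.univ)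
    (hKfolner : ∀ C : Set G, IsCompact C →
      Tendsto (fun n => μ (K n * C ∩ (K n)ᶜ * C) / μ (K n)) atTop (nhds 0))
    (g : H)
    (Λ : Set G) (A B : ℝ) (hA : 0 < A)
    (hriesz : ∀ c : ↥Λ →₀ ℂ,
      A * ∑ l ∈ c.support, ‖c l‖ ^ 2
          ≤ ‖∑ l ∈ c.support, c l • π (l : G) g‖ ^ 2 ∧
        ‖∑ l ∈ c.support, c l • π (l : G) g‖ ^ 2 ≤ B * ∑ l ∈ c.support, ‖c l‖ ^ 2) :
    ∃ C > 0,
    ∀ ε > 0, ∃ N : ℕ, ∀ n ≥ N, ∀ x : G, (Λ ∩ x • K n).Finite ∧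
      ((Λ ∩ x • K n).ncard : ℝ) ≤ (dπ + ε) * (μ (K n)).toReal := by
  have hv : HasLowerRieszBound ℂ A fun l : Λ => π l g := fun c => (hriesz c).1
  have hexh : ⋃ m, interior (K m) = Set.univ :=
    Set.eq_univ_of_forall fun y => by
      obtain ⟨m, hm⟩ := Set.mem_iUnion.mp (hKexh.symm ▸ Set.mem_univ y)
      exact Set.mem_iUnion.mpr ⟨m + 1, hKmono m hm⟩
  have htail := tendsto_setIntegral_compl_of_monotone
    (integrable_norm_inner_sq hdπ.ne' hortho g g) (fun m => isOpen_interior.measurableSet)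
    (monotone_nat_of_le_succ fun m => interior_subset.trans (hKmono m)) hexh
  refine ⟨1, one_pos, fun ε hε => ?_⟩
  set η := ε / (2 * dπ + ε)
  have hη : 0 < η := by positivity
  obtain ⟨m, hm⟩ := (((htail.const_mul dπ).div_const (A * ‖g‖ ^ 2)).eventually_lt_const
    (by simpa using hη)).exists
  obtain ⟨N, hN⟩ := eventually_atTop.mp (eventually_measureReal_mul_le_of_tendsto (hK1 m)
    (fun n => (hKcpt n).measure_lt_top.ne) (hKfolner _ (hKcpt m)) hη)
  refine ⟨N, fun n hn x => Set.finite_inter_and_ncard_le_of_forall_finset fun F hF => ?_⟩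
  have hKK : μ (K n * K m) ≠ ⊤ := ((hKcpt n).mul (hKcpt m)).measure_lt_top.ne
  have hcount := card_mul_one_sub_le_measure hπnorm hπproj hdπ hortho hA hv F hF isOpen_interior
    (measure_ne_top_of_subset (Set.mul_subset_mul_left interior_subset) hKK)
  refine le_add_mul_of_mul_one_sub_le hdπ hε (Nat.cast_nonneg _) hm.le (hcount.trans ?_)
  gcongr
  exact (measureReal_mono (Set.mul_subset_mul_left interior_subset) hKK).trans (hN n hn)

/-- the upper Beurling density of the index set of a coherent Riesz
sequence is at most the formal degree: `D⁺(Λ) ≤ d_π`, phrased as: for every `ε > 0`,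
eventually `#(Λ ∩ xKₙ) ≤ (d_π + ε) μ(Kₙ)` uniformly in `x`. -/
theorem coherent_riesz_upper_density {G H : Type*} [Group G] [TopologicalSpace G]
    [IsTopologicalGroup G] [LocallyCompactSpace G] [SecondCountableTopology G]
    [MeasurableSpace G] [BorelSpace G]
    [NormedAddCommGroup H] [InnerProductSpace ℂ H] [CompleteSpace H]
    (μ : Measure G) [μ.IsHaarMeasure] [μ.IsMulRightInvariant]
    (π : G → H →L[ℂ] H)
    (hπnorm : ∀ (x : G) (f : H), ‖π x f‖ = ‖f‖)
    (hπproj : ∀ x y : G, ∃ c : ℂ, ‖c‖ = 1 ∧ (π x).comp (π y) = c • π (x * y))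
    (hπmeas : ∀ f h : H, Measurable fun x => (inner ℂ f (π x h) : ℂ))
    (hπirr : ∀ V : Submodule ℂ H, (∀ x : G, ∀ v ∈ V, π x v ∈ V) → V ≠ ⊥ → V = ⊤)
    (dπ : ℝ) (hdπ : 0 < dπ)
    (hortho : ∀ f h : H, ∫ x, ‖(inner ℂ f (π x h) : ℂ)‖ ^ 2 ∂μ = dπ⁻¹ * ‖f‖ ^ 2 * ‖h‖ ^ 2)
    (K : ℕ → Set G)
    (hKcpt : ∀ n, IsCompact (K n)) (hKpos : ∀ n, 0 < μ (K n))
    (hK1 : ∀ n, (1 : G) ∈ K n) (hKmono : ∀ n, K n ⊆ interior (K (n + 1)))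
    (hKexh : (⋃ n, K n) = Set.univ)
    (hKfolner : ∀ C : Set G, IsCompact C →
      Tendsto (fun n => μ (K n * C ∩ (K n)ᶜ * C) / μ (K n)) atTop (nhds 0))
    (Q : Set G) (hQcpt : IsCompact (closure Q)) (hQsym : Q⁻¹ = Q) (hQ1 : Q ∈ nhds 1)
    (g : H)
    (hgD : Integrable (fun x => (⨆ q : Q, ‖(inner ℂ g (π (x * (q : G)) g) : ℂ)‖) ^ 2) μ)
    (Λ : Set G) (A B : ℝ) (hA : 0 < A) (hAB : A ≤ B)
    (hriesz : ∀ c : ↥Λ →₀ ℂ,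
      A * ∑ l ∈ c.support, ‖c l‖ ^ 2
          ≤ ‖∑ l ∈ c.support, c l • π (l : G) g‖ ^ 2 ∧
        ‖∑ l ∈ c.support, c l • π (l : G) g‖ ^ 2 ≤ B * ∑ l ∈ c.support, ‖c l‖ ^ 2) :
    ∃ C > 0,
    ∀ ε > 0, ∃ N : ℕ, ∀ n ≥ N, ∀ x : G, (Λ ∩ x • K n).Finite ∧
      ((Λ ∩ x • K n).ncard : ℝ) ≤ (dπ + ε) * (μ (K n)).toReal :=
  coherent_riesz_upper_density_general μ π hπnorm hπproj dπ hdπ hortho K hKcpt hK1 hKmono hKexh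
    hKfolner g Λ A B hA hriesz
end

section
/- Let G be a group of polynomial growth of exponent D with a periodic metric satisfying the δ-annular decay property, r_0 > 1 with B_{r_0} containing a unit neighborhood, Q = B_{r_0}, and α > 1 − δ. If g ∈ H_π is nonzero with |⟨g, π(x)g⟩|/‖g‖² ≤ C_0 (1+|x|)^{−(D+α)/2} for all x ∈ G, then there is a constant C'' = C''(G, α, r_0, δ) > 0 such that for every r > r_0, ∫_{(G \ B_r) B_{r_0}} |M_Q V_g g(x)|² dμ(x) ≤ C_0² ‖g‖⁴ C'' r^{1−δ−α}. -/
/-!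
Moving by `z ∈ B_{r₀}` changes `1 + |x|` by at most a factor `1 + r₀`, so the squared local maximal
function of `V_g g` decays like `(1 + |x|)^{-(D+α)}`. The set `(G ∖ B_r) B_{r₀}` lies outside
`B_{r-r₀}`; cutting it into unit annuli, each of measure `≲ R^{D-δ}` by annular decay and polynomial
growth, leaves the sum `∑ₘ (r - r₀ + 1 + m)^{-(α+δ)}`, which telescopes against `(·)^{-(α+δ-1)}`
and is `≲ r^{1-δ-α}` because `r - r₀ + 1 ≥ r / r₀`.
-/

open MeasureTheory Pointwise Finset
open scoped ENNReal

lemma mul_sub_mul_rpow_neg_le_rpow_neg_sub_rpow_neg {a b γ : ℝ} (hγ : 0 ≤ γ) (ha : 0 < a)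
    (hab : a ≤ b) :
    γ * (b - a) * b ^ (-(γ + 1)) ≤ a ^ (-γ) - b ^ (-γ) := by
  have hb : 0 < b := ha.trans_le hab
  -- `(a/b)^(-γ) = exp (-γ log (a/b)) ≥ 1 - γ log (a/b) ≥ 1 + γ (1 - a/b)`
  have key : 1 + γ * (1 - a / b) ≤ (a / b) ^ (-γ) := by
    rw [Real.rpow_def_of_pos (div_pos ha hb)]
    have := Real.log_le_sub_one_of_pos (div_pos ha hb)
    nlinarith [Real.add_one_le_exp (Real.log (a / b) * -γ)]
  have hab' : a ^ (-γ) = b ^ (-γ) * (a / b) ^ (-γ) := by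
    rw [Real.div_rpow ha.le hb.le, mul_div_cancel₀ _ (Real.rpow_pos_of_pos hb _).ne']
  have hb1 : b ^ (-(γ + 1)) = b ^ (-γ) / b := by
    rw [neg_add, Real.rpow_add hb, Real.rpow_neg_one, div_eq_mul_inv]
  rw [hab', hb1]
  have hbγ : 0 < b ^ (-γ) := Real.rpow_pos_of_pos hb _
  calc γ * (b - a) * (b ^ (-γ) / b) = b ^ (-γ) * (γ * (1 - a / b)) := by field_simp
    _ ≤ b ^ (-γ) * ((a / b) ^ (-γ) - 1) := by gcongr; linarith
    _ = _ := by ring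

lemma sum_range_add_rpow_neg_le {γ t : ℝ} (hγ : 0 < γ) (ht : 1 ≤ t) (n : ℕ) :
    ∑ m ∈ range n, (t + m) ^ (-(γ + 1)) ≤ (1 + 1 / γ) * t ^ (-γ) := by
  have ht0 : 0 < t := by linarith
  cases n with
  | zero => simp only [range_zero, sum_empty]; positivity
  | succ n =>
    have hhead : t ^ (-(γ + 1)) ≤ t ^ (-γ) := Real.rpow_le_rpow_of_exponent_le ht (by linarith)
    have hstep : ∀ m ∈ range n, (t + ↑(m + 1)) ^ (-(γ + 1)) ≤
        (1 / γ) * ((t + m) ^ (-γ) - (t + ↑(m + 1)) ^ (-γ)) := by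
      intro m _
      have h := mul_sub_mul_rpow_neg_le_rpow_neg_sub_rpow_neg hγ.le (by positivity : 0 < t + m)
        (by push_cast; linarith : t + m ≤ t + ↑(m + 1))
      rw [show t + ↑(m + 1) - (t + m) = (1 : ℝ) by push_cast; ring, mul_one] at h
      rw [one_div, ← div_eq_inv_mul, le_div_iff₀' hγ]
      exact h
    have htail : (1 / γ) * (t ^ (-γ) - (t + n) ^ (-γ)) ≤ 1 / γ * t ^ (-γ) := by
      have : 0 ≤ (t + n) ^ (-γ) := Real.rpow_nonneg (by positivity) _
      have : 0 < 1 / γ := by positivity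
      nlinarith
    rw [sum_range_succ', Nat.cast_zero, add_zero]
    calc ∑ m ∈ range n, (t + ↑(m + 1)) ^ (-(γ + 1)) + t ^ (-(γ + 1))
        ≤ ∑ m ∈ range n, (1 / γ) * ((t + m) ^ (-γ) - (t + ↑(m + 1)) ^ (-γ)) + t ^ (-γ) := by
          gcongr with m hm; exact hstep m hm
      _ = (1 / γ) * (t ^ (-γ) - (t + n) ^ (-γ)) + t ^ (-γ) := by
          rw [← mul_sum, sum_range_sub' (fun m : ℕ => (t + m) ^ (-γ))]; simp
      _ ≤ (1 + 1 / γ) * t ^ (-γ) := by linarith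

lemma tsum_ofReal_add_rpow_neg_le {γ t : ℝ} (hγ : 0 < γ) (ht : 1 ≤ t) :
    ∑' m : ℕ, ENNReal.ofReal ((t + m) ^ (-(γ + 1))) ≤ ENNReal.ofReal ((1 + 1 / γ) * t ^ (-γ)) := by
  refine ENNReal.tsum_le_of_sum_range_le fun n => ?_
  rw [← ENNReal.ofReal_sum_of_nonneg fun m _ => Real.rpow_nonneg (by positivity) _]
  exact ENNReal.ofReal_le_ofReal (sum_range_add_rpow_neg_le hγ ht n)

lemma setOf_le_subset_iUnion_annulus {X : Type*} (f : X → ℝ) (t : ℝ) :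
    {x | t - 1 ≤ f x} ⊆ ⋃ m : ℕ, {x | f x < t + m} \ {x | f x < t + m - 1} := by
  intro x hx
  have h0 : 0 ≤ f x - (t - 1) := sub_nonneg.2 hx
  refine Set.mem_iUnion.2 ⟨⌊f x - (t - 1)⌋₊, ?_, ?_⟩
  · have := Nat.lt_floor_add_one (f x - (t - 1))
    simp only [Set.mem_ofPred_eq]; linarith
  · have := Nat.floor_le h0
    simp only [Set.mem_ofPred_eq, not_lt]; linarith

lemma setLIntegral_le_of_decay_of_annulus_growth {X : Type*} [MeasurableSpace X] (μ : Measure X)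
    (f : X → ℝ) (F : X → ℝ≥0∞) {K c q e t : ℝ} (hK : 0 ≤ K) (hc : 0 ≤ c) (hq : 0 ≤ q)
    (hqe : e + 1 < q) (ht : 1 ≤ t) (hF : ∀ x, F x ≤ ENNReal.ofReal (K * (1 + f x) ^ (-q)))
    (hann : ∀ R, 1 ≤ R → μ ({x | f x < R} \ {x | f x < R - 1}) ≤ ENNReal.ofReal (c * R ^ e)) :
    ∫⁻ x in {x | t - 1 ≤ f x}, F x ∂μ ≤
      ENNReal.ofReal (K * c * ((1 + 1 / (q - e - 1)) * t ^ (-(q - e - 1)))) := by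
  set γ := q - e - 1
  have hannulus : ∀ m : ℕ, ∫⁻ x in {x | f x < t + m} \ {x | f x < t + m - 1}, F x ∂μ ≤
      ENNReal.ofReal (K * c) * ENNReal.ofReal ((t + m) ^ (-(γ + 1))) := by
    intro m
    have hR : 1 ≤ t + m := by have := m.cast_nonneg (α := ℝ); linarith
    have hR0 : 0 < t + m := by linarith
    have hFm : ∀ x ∈ {x | f x < t + m} \ {x | f x < t + m - 1},
        F x ≤ ENNReal.ofReal (K * (t + m) ^ (-q)) := fun x hx => by
      have : t + m ≤ 1 + f x := by
        have := hx.2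
        simp only [Set.mem_ofPred_eq, not_lt] at this
        linarith
      exact (hF x).trans (ENNReal.ofReal_le_ofReal (mul_le_mul_of_nonneg_left
        (Real.rpow_le_rpow_of_nonpos hR0 this (neg_nonpos.2 hq)) hK))
    calc ∫⁻ x in {x | f x < t + m} \ {x | f x < t + m - 1}, F x ∂μ
        ≤ ENNReal.ofReal (K * (t + m) ^ (-q)) * μ ({x | f x < t + m} \ {x | f x < t + m - 1}) :=
          (setLIntegral_mono measurable_const hFm).trans_eq (setLIntegral_const _ _)
      _ ≤ ENNReal.ofReal (K * (t + m) ^ (-q)) * ENNReal.ofReal (c * (t + m) ^ e) := by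
          gcongr; exact hann _ hR
      _ = ENNReal.ofReal (K * c) * ENNReal.ofReal ((t + m) ^ (-(γ + 1))) := by
          rw [← ENNReal.ofReal_mul (by positivity), ← ENNReal.ofReal_mul (by positivity)]
          congr 1
          rw [show -(γ + 1) = -q + e by ring, Real.rpow_add hR0]
          ring
  calc ∫⁻ x in {x | t - 1 ≤ f x}, F x ∂μ
      ≤ ∫⁻ x in ⋃ m : ℕ, {x | f x < t + m} \ {x | f x < t + m - 1}, F x ∂μ :=
        lintegral_mono_set (setOf_le_subset_iUnion_annulus f t)
    _ ≤ ∑' m : ℕ, ∫⁻ x in {x | f x < t + m} \ {x | f x < t + m - 1}, F x ∂μ :=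
        lintegral_iUnion_le _ _
    _ ≤ ∑' m : ℕ, ENNReal.ofReal (K * c) * ENNReal.ofReal ((t + m) ^ (-(γ + 1))) :=
        ENNReal.tsum_le_tsum hannulus
    _ ≤ ENNReal.ofReal (K * c) * ENNReal.ofReal ((1 + 1 / γ) * t ^ (-γ)) := by
        rw [ENNReal.tsum_mul_left]
        gcongr
        exact tsum_ofReal_add_rpow_neg_le (by linarith) ht
    _ = _ := (ENNReal.ofReal_mul (by positivity)).symm

lemma measure_annulus_le_of_annular_decay {X : Type*} [MeasurableSpace X] (μ : Measure X)
    (B : ℝ → Set X) {c c₂ D δ R : ℝ} (hc : 0 ≤ c) (hR : 0 < R)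
    (hAD : μ (B R \ B (R - 1)) ≤ ENNReal.ofReal (c * (1 / R) ^ δ) * μ (B R))
    (hgrowth : μ (B R) ≤ ENNReal.ofReal (c₂ * R ^ D)) :
    μ (B R \ B (R - 1)) ≤ ENNReal.ofReal (c * c₂ * R ^ (D - δ)) := by
  calc μ (B R \ B (R - 1)) ≤ ENNReal.ofReal (c * (1 / R) ^ δ) * ENNReal.ofReal (c₂ * R ^ D) :=
        hAD.trans (by gcongr)
    _ = ENNReal.ofReal (c * c₂ * R ^ (D - δ)) := by
        rw [← ENNReal.ofReal_mul (by positivity), one_div, Real.inv_rpow hR.le,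
          Real.rpow_sub hR, div_eq_mul_inv]
        ring_nf

section

variable {G : Type*} [Group G] {d : G → G → ℝ}

lemma d_le_d_mul_add (hinv : ∀ x y z : G, d (z * x) (z * y) = d x y)
    (htri : ∀ x y z : G, d x z ≤ d x y + d y z) (hsymm : ∀ x y : G, d x y = d y x) (x z : G) :
    d x 1 ≤ d (x * z) 1 + d z 1 := by
  have hxz : d x (x * z) = d z 1 := by rw [hsymm z, ← hinv 1 z x, mul_one]
  linarith [htri x (x * z) 1]

lemma compl_ball_mul_ball_subset (hinv : ∀ x y z : G, d (z * x) (z * y) = d x y)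
    (htri : ∀ x y z : G, d x z ≤ d x y + d y z) (hsymm : ∀ x y : G, d x y = d y x) (r ρ : ℝ) :
    {y : G | d y 1 < r}ᶜ * {y : G | d y 1 < ρ} ⊆ {x | r - ρ ≤ d x 1} := by
  rintro _ ⟨a, ha, b, hb, rfl⟩
  have := d_le_d_mul_add hinv htri hsymm a b
  simp only [Set.mem_compl_iff, Set.mem_ofPred_eq, not_lt] at ha hb ⊢
  linarith

lemma iSup_mul_le_of_decay (hinv : ∀ x y z : G, d (z * x) (z * y) = d x y)
    (htri : ∀ x y z : G, d x z ≤ d x y + d y z) (hsymm : ∀ x y : G, d x y = d y x)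
    (hnonneg : ∀ x y : G, 0 ≤ d x y) {φ : G → ℝ} {A p ρ : ℝ} (hA : 0 ≤ A) (hp : 0 ≤ p)
    (hρ : 0 ≤ ρ) (hφ : ∀ y, φ y ≤ A * (1 + d y 1) ^ (-p)) (x : G) :
    ⨆ z : {y : G // d y 1 < ρ}, φ (x * z) ≤ A * (1 + ρ) ^ p * (1 + d x 1) ^ (-p) := by
  have hx : 0 < 1 + d x 1 := by linarith [hnonneg x 1]
  refine Real.iSup_le (fun z => (hφ _).trans ?_) (by positivity)
  have hle : (1 + d x 1) / (1 + ρ) ≤ 1 + d (x * z) 1 := by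
    rw [div_le_iff₀ (by linarith)]
    nlinarith [d_le_d_mul_add hinv htri hsymm x z, z.2, hnonneg (x * z) 1]
  calc A * (1 + d (x * z) 1) ^ (-p) ≤ A * ((1 + d x 1) / (1 + ρ)) ^ (-p) :=
        mul_le_mul_of_nonneg_left
          (Real.rpow_le_rpow_of_nonpos (by positivity) hle (neg_nonpos.2 hp)) hA
    _ = A * (1 + ρ) ^ p * (1 + d x 1) ^ (-p) := by
        rw [Real.div_rpow hx.le (by linarith), Real.rpow_neg (by linarith : (0:ℝ) ≤ 1 + ρ),
          div_inv_eq_mul]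
        ring


lemma ofReal_sq_iSup_mul_le_of_decay (hinv : ∀ x y z : G, d (z * x) (z * y) = d x y)
    (htri : ∀ x y z : G, d x z ≤ d x y + d y z) (hsymm : ∀ x y : G, d x y = d y x)
    (hnonneg : ∀ x y : G, 0 ≤ d x y) {φ : G → ℝ} {A q ρ : ℝ} (hA : 0 ≤ A) (hφ₀ : ∀ y, 0 ≤ φ y)
    (hq : 0 ≤ q) (hρ : 0 ≤ ρ) (hφ : ∀ y, φ y ≤ A * (1 + d y 1) ^ (-(q / 2))) (x : G) :
    ENNReal.ofReal ((⨆ z : {y : G // d y 1 < ρ}, φ (x * z)) ^ 2) ≤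
      ENNReal.ofReal (A ^ 2 * (1 + ρ) ^ q * (1 + d x 1) ^ (-q)) := by
  refine ENNReal.ofReal_le_ofReal ((pow_le_pow_left₀ (Real.iSup_nonneg fun _ => hφ₀ _)
    (iSup_mul_le_of_decay hinv htri hsymm hnonneg hA (by positivity) hρ hφ x) 2).trans_eq ?_)
  rw [mul_pow, mul_pow, ← Real.rpow_mul_natCast (by linarith),
    ← Real.rpow_mul_natCast (by linarith [hnonneg x 1])]
  ring_nf

end

lemma add_one_sub_rpow_neg_le {r ρ γ : ℝ} (hρ : 1 ≤ ρ) (hr : ρ < r) (hγ : 0 ≤ γ) :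
    (r - ρ + 1) ^ (-γ) ≤ ρ ^ γ * r ^ (-γ) := by
  have hρ0 : 0 < ρ := by linarith
  have hle : r / ρ ≤ r - ρ + 1 := by
    rw [div_le_iff₀ hρ0]
    nlinarith
  calc (r - ρ + 1) ^ (-γ) ≤ (r / ρ) ^ (-γ) :=
        Real.rpow_le_rpow_of_nonpos (div_pos (by linarith) hρ0) hle (neg_nonpos.2 hγ)
    _ = ρ ^ γ * r ^ (-γ) := by
        rw [Real.div_rpow (by linarith) hρ0.le, Real.rpow_neg hρ0.le, div_inv_eq_mul, mul_comm]

theorem maximal_function_tail_estimate_general {G H : Type*} [Group G] [MeasurableSpace G]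
    [NormedAddCommGroup H] [InnerProductSpace ℂ H]
    (μ : Measure G)
    (π : G → H →L[ℂ] H)
    (d : G → G → ℝ)
    (hinv : ∀ x y z : G, d (z * x) (z * y) = d x y)
    (htri : ∀ x y z : G, d x z ≤ d x y + d y z)
    (hsymm : ∀ x y : G, d x y = d y x)
    (hnonneg : ∀ x y : G, 0 ≤ d x y)
    (D : ℝ) (hD : 0 < D)
    (δ : ℝ) (hδ : δ ∈ Set.Ioc (0 : ℝ) 1)
    (c : ℝ) (hc : 0 < c)
    (hAD : ∀ r : ℝ, 1 ≤ r → ∀ s : ℝ, 0 < s → s ≤ r →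
      μ ({x : G | d x 1 < r} \ {x : G | d x 1 < r - s})
        ≤ ENNReal.ofReal (c * (s / r) ^ δ) * μ {x : G | d x 1 < r})
    (c₂ : ℝ) (hc₂ : 0 < c₂)
    (hgrowth : ∀ t : ℝ, 1 ≤ t → μ {x : G | d x 1 < t} ≤ ENNReal.ofReal (c₂ * t ^ D))
    (r₀ : ℝ) (hr₀ : 1 < r₀)
    (α : ℝ) (hα : 1 - δ < α)
    (C₀ : ℝ) (hC₀ : 0 < C₀)
    (g : H)
    (hdecay : ∀ x : G,
      ‖(inner ℂ g (π x g) : ℂ)‖ / ‖g‖ ^ 2 ≤ C₀ * (1 + d x 1) ^ (-(D + α) / 2)) :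
    ∃ C'' > 0, ∀ r : ℝ, r₀ < r →
      ∫⁻ x in {y : G | d y 1 < r}ᶜ * {y : G | d y 1 < r₀},
          ENNReal.ofReal
            ((⨆ z : {y : G // d y 1 < r₀}, ‖(inner ℂ g (π (x * (z : G)) g) : ℂ)‖) ^ 2) ∂μ
        ≤ ENNReal.ofReal (C₀ ^ 2 * ‖g‖ ^ 4 * C'' * r ^ (1 - δ - α)) := by
  have hγ : 0 < α + δ - 1 := by linarith
  have hq : 0 ≤ D + α := by linarith [hδ.2]
  have hcoef : ∀ x, ‖(inner ℂ g (π x g) : ℂ)‖ ≤ C₀ * ‖g‖ ^ 2 * (1 + d x 1) ^ (-((D + α) / 2)) := by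
    intro x
    rcases eq_or_ne g 0 with rfl | hg
    · simp
    rw [← neg_div, mul_right_comm, ← div_le_iff₀ (by positivity)]
    exact hdecay x
  refine ⟨c * c₂ * (1 + r₀) ^ (D + α) * ((1 + 1 / (α + δ - 1)) * r₀ ^ (α + δ - 1)),
    by positivity, fun r hr => ?_⟩
  have htail := setLIntegral_le_of_decay_of_annulus_growth μ (fun x => d x 1) _ (by positivity)
    (by positivity) hq (by linarith : D - δ + 1 < D + α) (by linarith : 1 ≤ r - r₀ + 1)
    (fun x => ofReal_sq_iSup_mul_le_of_decay (ρ := r₀) hinv htri hsymm hnonneg (by positivity)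
      (fun _ => norm_nonneg _) hq (by linarith) hcoef x)
    fun R hR => measure_annulus_le_of_annular_decay μ (fun r => {x | d x 1 < r}) hc.le
      (by linarith) (hAD R hR 1 one_pos hR) (hgrowth R hR)
  rw [show D + α - (D - δ) - 1 = α + δ - 1 by ring, add_sub_cancel_right] at htail
  calc _ ≤ _ := lintegral_mono_set (compl_ball_mul_ball_subset hinv htri hsymm r r₀)
    _ ≤ _ := htail
    _ ≤ _ := ENNReal.ofReal_le_ofReal ?_
  have hshift := add_one_sub_rpow_neg_le hr₀.le hr hγ.le
  rw [show 1 - δ - α = -(α + δ - 1) by ring]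
  calc (C₀ * ‖g‖ ^ 2) ^ 2 * (1 + r₀) ^ (D + α) * (c * c₂) *
        ((1 + 1 / (α + δ - 1)) * (r - r₀ + 1) ^ (-(α + δ - 1)))
      ≤ (C₀ * ‖g‖ ^ 2) ^ 2 * (1 + r₀) ^ (D + α) * (c * c₂) *
        ((1 + 1 / (α + δ - 1)) * (r₀ ^ (α + δ - 1) * r ^ (-(α + δ - 1)))) := by gcongr
    _ = _ := by ring

/-- tail estimate for the local maximal function of a matrix coefficient
with decay of order `(D+α)/2`:
`∫_{(G∖B_r)B_{r₀}} |M_Q V_g g|² dμ ≤ C₀² ‖g‖⁴ C'' r^{1−δ−α}` for all `r > r₀`. -/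
theorem maximal_function_tail_estimate {G H : Type*} [Group G] [TopologicalSpace G]
    [IsTopologicalGroup G] [MeasurableSpace G] [BorelSpace G]
    [NormedAddCommGroup H] [InnerProductSpace ℂ H]
    (μ : Measure G) [μ.IsHaarMeasure] [μ.IsMulRightInvariant]
    (π : G → H →L[ℂ] H)
    (hπnorm : ∀ (x : G) (f : H), ‖π x f‖ = ‖f‖)
    (d : G → G → ℝ)
    (hinv : ∀ x y z : G, d (z * x) (z * y) = d x y)
    (htri : ∀ x y z : G, d x z ≤ d x y + d y z)
    (hsymm : ∀ x y : G, d x y = d y x)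
    (hnonneg : ∀ x y : G, 0 ≤ d x y)
    (D : ℝ) (hD : 0 < D)
    (δ : ℝ) (hδ : δ ∈ Set.Ioc (0 : ℝ) 1)
    (c : ℝ) (hc : 0 < c)
    (hAD : ∀ r : ℝ, 1 ≤ r → ∀ s : ℝ, 0 < s → s ≤ r →
      μ ({x : G | d x 1 < r} \ {x : G | d x 1 < r - s})
        ≤ ENNReal.ofReal (c * (s / r) ^ δ) * μ {x : G | d x 1 < r})
    (c₂ : ℝ) (hc₂ : 0 < c₂)
    (hgrowth : ∀ t : ℝ, 1 ≤ t → μ {x : G | d x 1 < t} ≤ ENNReal.ofReal (c₂ * t ^ D))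
    (r₀ : ℝ) (hr₀ : 1 < r₀) (hr₀nbhd : {x : G | d x 1 < r₀} ∈ nhds 1)
    (α : ℝ) (hα : 1 - δ < α)
    (C₀ : ℝ) (hC₀ : 0 < C₀)
    (g : H) (hg : g ≠ 0)
    (hdecay : ∀ x : G,
      ‖(inner ℂ g (π x g) : ℂ)‖ / ‖g‖ ^ 2 ≤ C₀ * (1 + d x 1) ^ (-(D + α) / 2)) :
    ∃ C'' > 0, ∀ r : ℝ, r₀ < r →
      ∫⁻ x in {y : G | d y 1 < r}ᶜ * {y : G | d y 1 < r₀},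
          ENNReal.ofReal
            ((⨆ z : {y : G // d y 1 < r₀}, ‖(inner ℂ g (π (x * (z : G)) g) : ℂ)‖) ^ 2) ∂μ
        ≤ ENNReal.ofReal (C₀ ^ 2 * ‖g‖ ^ 4 * C'' * r ^ (1 - δ - α)) :=
  maximal_function_tail_estimate_general μ π d hinv htri hsymm hnonneg D hD δ hδ c hc hAD c₂ hc₂
    hgrowth r₀ hr₀ α hα C₀ hC₀ g hdecay
end
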